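/- Let Φ be an irreducible root system with extended base Δ̃ and marks dᵢ (d₀ = 1), and let Ψ be the closed subsystem generated by a subset Δ_Ψ ⊆ Δ̃. Then the torsion subgroup of ℤΦ/ℤΨ is cyclic of order d_{Δ_Ψ} = gcd{dᵢ : αᵢ ∈ Δ̃ \ Δ_Ψ}. -/
import Mathlib

/-- Bezout's identity for `Finset.gcd` over `ℕ`, in `ℤ`. -/
private lemma bezout_finset {ι : Type*} [DecidableEq ι] (s : Finset ι) (f : ι → ℕ) :
    ∃ c : ι → ℤ, ∑ i ∈ s, c i * (f i : ℤ) = ((s.gcd f : ℕ) : ℤ) := by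
  induction s using Finset.induction with
  | empty => exact ⟨0, by simp⟩
  | @insert a s ha ih =>
    obtain ⟨c, hc⟩ := ih
    refine ⟨fun i => if i = a then Nat.gcdA (f a) (s.gcd f)
      else Nat.gcdB (f a) (s.gcd f) * c i, ?_⟩
    simp only [Finset.sum_insert ha]
    rw [if_pos trivial]
    have hrest : ∑ i ∈ s, (if i = a then Nat.gcdA (f a) (s.gcd f)
        else Nat.gcdB (f a) (s.gcd f) * c i) * (f i : ℤ)
        = Nat.gcdB (f a) (s.gcd f) * ((s.gcd f : ℕ) : ℤ) := by
      rw [← hc, Finset.mul_sum]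
      refine Finset.sum_congr rfl fun i hi => ?_
      rw [if_neg (by rintro rfl; exact ha hi)]
      ring
    rw [hrest, Finset.gcd_insert]
    have h2 : GCDMonoid.gcd (f a) (s.gcd f) = Nat.gcd (f a) (s.gcd f) := rfl
    rw [h2, Nat.gcd_eq_gcd_ab]
    ring

/-- If `x` has exact order `g ≠ 0` (in the divisibility sense) and every finite-order element is
a multiple of `x`, the torsion subgroup is `ZMod g`. -/
private lemma torsion_equiv_zmod {M : Type*} [AddCommGroup M] (g : ℕ) (hg : g ≠ 0) (x : M)
    (h1 : (g : ℤ) • x = 0) (h2 : ∀ m : ℤ, m • x = 0 → (g : ℤ) ∣ m)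
    (h3 : ∀ y : M, IsOfFinAddOrder y → ∃ m : ℤ, y = m • x) :
    Nonempty (AddCommGroup.torsion M ≃+ ZMod g) := by
  have hfin : IsOfFinAddOrder x := by
    rw [isOfFinAddOrder_iff_nsmul_eq_zero]
    exact ⟨g, Nat.pos_of_ne_zero hg, by rwa [← natCast_zsmul]⟩
  have hfg : (zmultiplesHom M x) ((g : ℕ) : ℤ) = 0 := by
    rwa [zmultiplesHom_apply]
  have hinj : Function.Injective (ZMod.lift g ⟨zmultiplesHom M x, hfg⟩) := by
    rw [ZMod.lift_injective]
    intro m hm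
    rw [ZMod.intCast_zmod_eq_zero_iff_dvd]
    exact h2 m (by rwa [zmultiplesHom_apply] at hm)
  have hφ_coe : ∀ m : ℤ, (ZMod.lift g ⟨zmultiplesHom M x, hfg⟩) ((m : ℤ) : ZMod g) = m • x :=
    fun m => ZMod.lift_coe g ⟨zmultiplesHom M x, hfg⟩ m
  have hmem : ∀ z : ZMod g, (ZMod.lift g ⟨zmultiplesHom M x, hfg⟩) z ∈ AddCommGroup.torsion M := by
    intro z
    obtain ⟨m, rfl⟩ := ZMod.intCast_surjective z
    rw [hφ_coe]
    exact hfin.zsmul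
  refine ⟨(AddEquiv.ofBijective
    ((ZMod.lift g ⟨zmultiplesHom M x, hfg⟩).codRestrict _ hmem) ⟨?_, ?_⟩).symm⟩
  · intro a b hab
    exact hinj (congrArg Subtype.val hab)
  · rintro ⟨y, hy⟩
    obtain ⟨m, rfl⟩ := h3 y hy
    exact ⟨((m : ℤ) : ZMod g), Subtype.ext (hφ_coe m)⟩

/-- Let `Φ` be an irreducible root system with base `Δ = {α₁,…,αₙ}` and marks
`dᵢ` (the coefficients of the highest root, with `d₀ = 1` on the affine node `α₀`), and let
`Ψ` be the closed subsystem generated by a subset `Δ_Ψ` of the extended base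
`Δ̃ = Δ ∪ {α₀}` (modelled as `Option (Fin n)`, `none` being `α₀`).  Identifying `ℤΦ` with
`Fin n → ℤ` via the basis `Δ`, the lattice `ℤΨ` is spanned by the simple roots in `Δ_Ψ`
together with `α₀ = -(Σ dᵢ αᵢ)` if `α₀ ∈ Δ_Ψ`.  Then the torsion subgroup of `ℤΦ/ℤΨ` is
cyclic of order `d_{Δ_Ψ} = gcd {dᵢ : αᵢ ∈ Δ̃ \ Δ_Ψ}`. -/
theorem torsion_of_quotient_cyclic_of_order_dS {n : ℕ}
    (D : Option (Fin n) → ℕ) (hD0 : D none = 1) (hDpos : ∀ i, 0 < D (some i))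
    (ΔΨ : Finset (Option (Fin n))) (hproper : ΔΨ ≠ Finset.univ)
    (vec : Option (Fin n) → (Fin n → ℤ))
    (hvec_simple : ∀ i : Fin n, vec (some i) = Pi.single i 1)
    (hvec_affine : vec none = -(∑ i : Fin n, (D (some i) : ℤ) • Pi.single i 1)) :
    Nonempty
      ((AddCommGroup.torsion
          ((Fin n → ℤ) ⧸ Submodule.span ℤ (vec '' ↑ΔΨ))) ≃+
        ZMod ((Finset.univ \ ΔΨ).gcd D)) := by
  classical
  set P : Submodule ℤ (Fin n → ℤ) := Submodule.span ℤ (vec '' ↑ΔΨ) with hP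
  set g : ℕ := (Finset.univ \ ΔΨ).gcd D with hgdef
  have hgen : ∀ s ∈ ΔΨ, vec s ∈ P := fun s hs => Submodule.subset_span ⟨s, hs, rfl⟩
  have hsingle : ∀ i : Fin n, some i ∈ ΔΨ → Pi.single i 1 ∈ P := fun i hi => by
    rw [← hvec_simple i]; exact hgen _ hi
  -- any vector supported on the simple roots of `ΔΨ` lies in `P`
  have hC : ∀ x : Fin n → ℤ, (∀ i, some i ∉ ΔΨ → x i = 0) → x ∈ P := by
    intro x hx
    have hxe : x = ∑ i : Fin n, x i • Pi.single i 1 := by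
      ext j
      simp [Pi.single_apply]
    rw [hxe]
    refine Submodule.sum_mem _ fun i _ => ?_
    by_cases hi : some i ∈ ΔΨ
    · exact Submodule.smul_mem _ _ (hsingle i hi)
    · rw [hx i hi, zero_smul]; exact Submodule.zero_mem _
  have hvn : ∀ i : Fin n, vec none i = -(D (some i) : ℤ) := by
    intro i
    rw [hvec_affine]
    simp [Pi.single_apply]
  -- characterization of elements of `P` on the coordinates outside `ΔΨ`
  have hP1 : ∀ x ∈ P, ∃ t : ℤ, (∀ i : Fin n, some i ∉ ΔΨ → x i = t * -(D (some i) : ℤ)) ∧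
      (none ∈ ΔΨ ∨ t = 0) := by
    intro x hx
    induction hx using Submodule.span_induction with
    | mem x hxs =>
      obtain ⟨s, hs, rfl⟩ := hxs
      cases s with
      | none => exact ⟨1, fun i _ => by rw [hvn i]; ring, Or.inl hs⟩
      | some j =>
        refine ⟨0, fun i hi => ?_, Or.inr rfl⟩
        have hne : i ≠ j := by rintro rfl; exact hi hs
        rw [hvec_simple j, Pi.single_eq_of_ne hne, zero_mul]
    | zero => exact ⟨0, fun i _ => by simp, Or.inr rfl⟩
    | add x y hx' hy' ihx ihy =>
      obtain ⟨t1, h1, d1⟩ := ihx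
      obtain ⟨t2, h2, d2⟩ := ihy
      refine ⟨t1 + t2, fun i hi => ?_, ?_⟩
      · rw [Pi.add_apply, h1 i hi, h2 i hi]; ring
      · rcases d1 with h | rfl
        · exact Or.inl h
        · rcases d2 with h | rfl
          · exact Or.inl h
          · exact Or.inr (by ring)
    | smul a x hx' ihx =>
      obtain ⟨t, h1, d1⟩ := ihx
      refine ⟨a * t, fun i hi => ?_, ?_⟩
      · rw [Pi.smul_apply, h1 i hi, smul_eq_mul]; ring
      · rcases d1 with h | rfl
        · exact Or.inl h
        · exact Or.inr (by ring)
  by_cases h0 : none ∈ ΔΨ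
  · -- the affine node belongs to `ΔΨ`
    obtain ⟨i0, hi0⟩ : ∃ i : Fin n, some i ∉ ΔΨ := by
      by_contra h
      push_neg at h
      refine hproper (Finset.eq_univ_iff_forall.mpr fun s => ?_)
      cases s with
      | none => exact h0
      | some i => exact h i
    have hgdvd : ∀ i : Fin n, some i ∉ ΔΨ → g ∣ D (some i) := fun i hi =>
      Finset.gcd_dvd (by simp [Finset.mem_sdiff, hi])
    have hgne : g ≠ 0 := by
      intro h
      have hz := Finset.gcd_eq_zero_iff.mp (hgdef ▸ h) (some i0)
        (by simp [Finset.mem_sdiff, hi0])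
      exact absurd hz (hDpos i0).ne'
    set w : Fin n → ℤ := fun i => if some i ∈ ΔΨ then 0 else -((D (some i) / g : ℕ) : ℤ)
      with hwdef
    have hgw : ∀ i : Fin n, some i ∉ ΔΨ → (g : ℤ) * w i = -(D (some i) : ℤ) := by
      intro i hi
      rw [hwdef]
      simp only [if_neg hi]
      rw [mul_neg, ← Nat.cast_mul, Nat.mul_div_cancel' (hgdvd i hi)]
    have hgwP : (g : ℤ) • w ∈ P := by
      have hsub : (g : ℤ) • w - vec none ∈ P := by
        apply hC
        intro i hi
        simp only [Pi.sub_apply, Pi.smul_apply, smul_eq_mul]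
        rw [hgw i hi, hvn i]; ring
      have := Submodule.add_mem P hsub (hgen none h0)
      simpa using this
    have hinj : ∀ m : ℤ, m • w ∈ P → (g : ℤ) ∣ m := by
      intro m hm
      obtain ⟨t, ht, _⟩ := hP1 _ hm
      have h1 : m * w i0 = t * -(D (some i0) : ℤ) := by
        simpa using ht i0 hi0
      have hDne : -(D (some i0) : ℤ) ≠ 0 := by
        simp only [ne_eq, neg_eq_zero, Nat.cast_eq_zero]
        exact (hDpos i0).ne'
      have key : m * -(D (some i0) : ℤ) = (t * (g : ℤ)) * -(D (some i0) : ℤ) := by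
        calc m * -(D (some i0) : ℤ) = m * ((g : ℤ) * w i0) := by rw [hgw i0 hi0]
          _ = (g : ℤ) * (m * w i0) := by ring
          _ = (g : ℤ) * (t * -(D (some i0) : ℤ)) := by rw [h1]
          _ = (t * (g : ℤ)) * -(D (some i0) : ℤ) := by ring
      have hm' := mul_right_cancel₀ hDne key
      exact ⟨t, by linarith⟩
    have hsurj : ∀ y : (Fin n → ℤ) ⧸ P, IsOfFinAddOrder y →
        ∃ m : ℤ, y = m • (Submodule.Quotient.mk w : (Fin n → ℤ) ⧸ P) := by
      intro y hy
      obtain ⟨x, rfl⟩ := Submodule.Quotient.mk_surjective P y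
      obtain ⟨k, hkpos, hky⟩ := isOfFinAddOrder_iff_nsmul_eq_zero.mp hy
      rw [← natCast_zsmul, ← Submodule.Quotient.mk_smul, Submodule.Quotient.mk_eq_zero] at hky
      obtain ⟨t, ht, _⟩ := hP1 _ hky
      obtain ⟨c, hc⟩ := bezout_finset (Finset.univ \ ΔΨ) D
      set c0 : ℤ := -∑ s ∈ Finset.univ \ ΔΨ, c s * (Option.elim s 0 x) with hc0
      have hkc : (k : ℤ) * c0 = t * (g : ℤ) := by
        have e1 : (k : ℤ) * c0
            = -∑ s ∈ Finset.univ \ ΔΨ, c s * ((k : ℤ) * Option.elim s 0 x) := by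
          rw [hc0, mul_neg, Finset.mul_sum]
          congr 1
          exact Finset.sum_congr rfl fun s _ => by ring
        have e2 : ∑ s ∈ Finset.univ \ ΔΨ, c s * ((k : ℤ) * Option.elim s 0 x)
            = -(t * (g : ℤ)) := by
          have estep : ∀ s ∈ Finset.univ \ ΔΨ,
              c s * ((k : ℤ) * Option.elim s 0 x) = -(t * (c s * (D s : ℤ))) := by
            intro s hs
            rw [Finset.mem_sdiff] at hs
            cases s with
            | none => exact absurd h0 hs.2
            | some i =>
              have hxi : (k : ℤ) * x i = t * -(D (some i) : ℤ) := by
                simpa using ht i hs.2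
              simp only [Option.elim]
              rw [hxi]; ring
          rw [Finset.sum_congr rfl estep, Finset.sum_neg_distrib, ← Finset.mul_sum, hc]
        rw [e1, e2, neg_neg]
      refine ⟨c0, ?_⟩
      rw [show (c0 • (Submodule.Quotient.mk w : (Fin n → ℤ) ⧸ P))
          = Submodule.Quotient.mk (c0 • w) from (Submodule.Quotient.mk_smul P c0 w).symm,
        Submodule.Quotient.eq]
      apply hC
      intro i hi
      have h1 : (k : ℤ) * x i = t * -(D (some i) : ℤ) := by simpa using ht i hi
      have h2 := hgw i hi
      have h3 : (g : ℤ) * ((k : ℤ) * (x i - c0 * w i)) = 0 := by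
        have expand : (g : ℤ) * ((k : ℤ) * (x i - c0 * w i))
            = ((k : ℤ) * x i) * (g : ℤ) - ((k : ℤ) * c0) * ((g : ℤ) * w i) := by ring
        rw [expand, h1, hkc, h2]; ring
      have hkne : (k : ℤ) ≠ 0 := Int.natCast_ne_zero.mpr hkpos.ne'
      have hgne' : (g : ℤ) ≠ 0 := Int.natCast_ne_zero.mpr hgne
      have key : x i - c0 * w i = 0 := by
        rcases mul_eq_zero.mp h3 with h | h
        · exact absurd h hgne'
        · rcases mul_eq_zero.mp h with h' | h'
          · exact absurd h' hkne
          · exact h'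
      simpa using key
    refine torsion_equiv_zmod g hgne (Submodule.Quotient.mk w) ?_ ?_ hsurj
    · rw [← Submodule.Quotient.mk_smul, Submodule.Quotient.mk_eq_zero]
      exact hgwP
    · intro m hm
      rw [← Submodule.Quotient.mk_smul, Submodule.Quotient.mk_eq_zero] at hm
      exact hinj m hm
  · -- the affine node is omitted: `g = 1` and the quotient is torsion-free
    have hg1 : g = 1 := by
      have hd : g ∣ D none := Finset.gcd_dvd (by simp [Finset.mem_sdiff, h0])
      rwa [hD0, Nat.dvd_one] at hd
    refine torsion_equiv_zmod g (hg1 ▸ one_ne_zero) 0 (smul_zero _) ?_ ?_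
    · intro m _
      rw [hg1]
      simp
    · intro y hy
      refine ⟨0, ?_⟩
      obtain ⟨x, rfl⟩ := Submodule.Quotient.mk_surjective P y
      obtain ⟨k, hkpos, hky⟩ := isOfFinAddOrder_iff_nsmul_eq_zero.mp hy
      rw [← natCast_zsmul, ← Submodule.Quotient.mk_smul, Submodule.Quotient.mk_eq_zero] at hky
      obtain ⟨t, ht, hd⟩ := hP1 _ hky
      have ht0 : t = 0 := hd.resolve_left h0
      have hx0 : ∀ i, some i ∉ ΔΨ → x i = 0 := by
        intro i hi
        have h1 : (k : ℤ) * x i = t * -(D (some i) : ℤ) := by simpa using ht i hi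
        rw [ht0, zero_mul] at h1
        have hkne : (k : ℤ) ≠ 0 := Int.natCast_ne_zero.mpr hkpos.ne'
        exact (mul_eq_zero.mp h1).resolve_left hkne
      have hmk : (Submodule.Quotient.mk x : (Fin n → ℤ) ⧸ P) = 0 := by
        rw [Submodule.Quotient.mk_eq_zero]; exact hC x hx0
      rw [hmk]; simp
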